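/- arXiv:2102.13496 — 2 statements merged into one kernel-verified Lean document; each statement's English description precedes it below -/
import Mathlib

section
/- Let R: [0,1] → ℝ be concave and nonnegative, and let q_m ∈ (0,1) satisfy R(q_m) = 1 and R(q) ≤ 1 for all q ∈ [0,1]. Then (i) R(q) ≥ (1 − q)/(1 − q_m) for every q ∈ [q_m, 1], and (ii) ∫_{q_m}^1 R(q)/q dq ≥ −ln(q_m)/(1 − q_m) − 1; consequently the expected payment of bidding the monopoly price in the sample-bid mechanism with α = 0.7 satisfies 0.7·(1 + ∫_{q_m}^1 R(q)/q dq) ≥ −0.7·ln(q_m)/(1 − q_m). -/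
/-!
By concavity, `R` lies above its chord from `(q_m, 1)` to `(1, R 1)`, and `R 1 ≥ 0`, so
`R q ≥ (1 - q)/(1 - q_m)` on `[q_m, 1]`. Dividing by `q` and integrating,
`∫_{q_m}^1 (1 - q)/q dq = -ln q_m - (1 - q_m)` gives (ii), and (iii) is (ii) rescaled.
Integrability of `R q / q` comes from `R` being antitone on `[q_m, 1]`: a concave function
decreases to the right of its maximum.
-/

open MeasureTheory Set Real

section Concave

variable {𝕜 β : Type*} [Field 𝕜] [LinearOrder 𝕜] [IsStrictOrderedRing 𝕜]
  [AddCommMonoid β] [LinearOrder β] [IsOrderedCancelAddMonoid β] [Module 𝕜 β]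
  [PosSMulStrictMono 𝕜 β] {s : Set 𝕜} {f : 𝕜 → β} {a : 𝕜}

theorem ConcaveOn.antitoneOn_of_isMaxOn (hf : ConcaveOn 𝕜 s f) (ha : a ∈ s)
    (hmax : IsMaxOn f s a) : AntitoneOn f (s ∩ Ici a) := by
  rintro y ⟨hy, hay⟩ z ⟨hz, -⟩ hyz
  rcases (show a ≤ y from hay).eq_or_lt with rfl | hay
  · exact hmax hz
  · exact hf.right_le_of_le_left'' ha hz hay hyz (hmax hy)

end Concave

theorem ConcaveOn.secant_le {s : Set ℝ} {f : ℝ → ℝ} (hf : ConcaveOn ℝ s f) {x y z : ℝ}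
    (hx : x ∈ s) (hy : y ∈ s) (hz : z ∈ Icc x y) (hxy : x < y) :
    (y - z) / (y - x) * f x + (z - x) / (y - x) * f y ≤ f z := by
  have hyx : 0 < y - x := sub_pos.mpr hxy
  have hcomb : (y - z) / (y - x) * x + (z - x) / (y - x) * y = z := by
    field_simp
    ring
  have hsum : (y - z) / (y - x) + (z - x) / (y - x) = 1 := by
    field_simp
    ring
  simpa only [smul_eq_mul, hcomb] using
    hf.2 hx hy (div_nonneg (by linarith [hz.2]) hyx.le) (div_nonneg (by linarith [hz.1]) hyx.le)
      hsum

theorem ConcaveOn.sub_div_sub_mul_le {s : Set ℝ} {f : ℝ → ℝ} (hf : ConcaveOn ℝ s f)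
    {x y z : ℝ} (hx : x ∈ s) (hy : y ∈ s) (hz : z ∈ Icc x y) (hxy : x < y) (hfy : 0 ≤ f y) :
    (y - z) / (y - x) * f x ≤ f z := by
  have : 0 ≤ (z - x) / (y - x) * f y :=
    mul_nonneg (div_nonneg (sub_nonneg.mpr hz.1) (sub_pos.mpr hxy).le) hfy
  linarith [hf.secant_le hx hy hz hxy]

theorem AntitoneOn.intervalIntegrable_div_self {f : ℝ → ℝ} {a b : ℝ} (ha : 0 < a)
    (hab : a ≤ b) (hf : AntitoneOn f (Icc a b)) :
    IntervalIntegrable (fun q => f q / q) volume a b := by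
  simpa only [div_eq_mul_inv] using
    (hf.mono (uIcc_of_le hab).subset).intervalIntegrable.mul_continuousOn
      (continuousOn_inv₀.mono fun q hq => (ha.trans_le (uIcc_of_le hab ▸ hq).1).ne')

theorem integral_sub_div_self {a b : ℝ} (ha : 0 < a) (hb : 0 < b) :
    ∫ q in a..b, (b - q) / q = b * log (b / a) - (b - a) := by
  have h0 : (0 : ℝ) ∉ uIcc a b := fun h => (lt_min ha hb).not_ge (by simpa using h.1)
  have hsplit : ∀ q ∈ uIcc a b, (b - q) / q = b * (1 / q) - 1 := fun q hq => by
    have : q ≠ 0 := fun h => h0 (h ▸ hq)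
    field_simp
  rw [intervalIntegral.integral_congr hsplit, intervalIntegral.integral_sub
    ((intervalIntegral.intervalIntegrable_one_div (fun q hq h => h0 (h ▸ hq))
      continuousOn_id).const_mul b) intervalIntegrable_const,
    intervalIntegral.integral_const_mul, integral_one_div h0]
  simp

/-- Computational core of Lemma 5.6: for a normalized concave revenue curve `R`
(maximum revenue `R q_m = 1` at monopoly quantile `q_m`), one has
(i) `R q ≥ (1 - q)/(1 - q_m)` on `[q_m, 1]`,
(ii) `∫ q in q_m..1, R q / q ≥ -log q_m / (1 - q_m) - 1`, and consequently
(iii) the expected payment of bidding the monopoly price in the sample-bid mechanism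
with `α = 0.7` satisfies `0.7 * (1 + ∫ q in q_m..1, R q / q) ≥ -0.7 * log q_m / (1 - q_m)`. -/
theorem monopoly_bid_payment_lower_bound
    (R : ℝ → ℝ)
    (hconc : ConcaveOn ℝ (Set.Icc 0 1) R)
    (hnonneg : ∀ q ∈ Set.Icc (0:ℝ) 1, 0 ≤ R q)
    (qm : ℝ) (hqm : qm ∈ Set.Ioo (0:ℝ) 1)
    (hRqm : R qm = 1)
    (hRle : ∀ q ∈ Set.Icc (0:ℝ) 1, R q ≤ 1) :
    (∀ q ∈ Set.Icc qm 1, (1 - q) / (1 - qm) ≤ R q)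
    ∧ (-Real.log qm / (1 - qm) - 1 ≤ ∫ q in qm..1, R q / q)
    ∧ (-(0.7 * Real.log qm) / (1 - qm) ≤ 0.7 * (1 + ∫ q in qm..1, R q / q)) := by
  obtain ⟨hqm0, hqm1⟩ := hqm
  have hqm_mem : qm ∈ Icc (0 : ℝ) 1 := ⟨hqm0.le, hqm1.le⟩
  have h1_mem : (1 : ℝ) ∈ Icc (0 : ℝ) 1 := ⟨zero_le_one, le_rfl⟩
  have chord : ∀ q ∈ Icc qm 1, (1 - q) / (1 - qm) ≤ R q := fun q hq => by
    simpa only [hRqm, mul_one] using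
      hconc.sub_div_sub_mul_le hqm_mem h1_mem hq hqm1 (hnonneg 1 h1_mem)
  have hanti : AntitoneOn R (Icc qm 1) :=
    (hconc.antitoneOn_of_isMaxOn hqm_mem fun q hq => hRqm ▸ hRle q hq).mono
      fun q hq => ⟨⟨hqm0.le.trans hq.1, hq.2⟩, hq.1⟩
  have hchord_anti : AntitoneOn (fun q => (1 - q) / (1 - qm)) (Icc qm 1) :=
    fun x _ y _ hxy => div_le_div_of_nonneg_right (by linarith) (sub_pos.mpr hqm1).le
  have integral_bound : -log qm / (1 - qm) - 1 ≤ ∫ q in qm..1, R q / q :=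
    calc -log qm / (1 - qm) - 1 = ∫ q in qm..1, (1 - q) / (1 - qm) / q := by
          simp_rw [div_right_comm _ (1 - qm)]
          rw [intervalIntegral.integral_div, integral_sub_div_self hqm0 one_pos, one_div,
            log_inv]
          field_simp
      _ ≤ ∫ q in qm..1, R q / q :=
          intervalIntegral.integral_mono_on hqm1.le
            (hchord_anti.intervalIntegrable_div_self hqm0 hqm1.le)
            (hanti.intervalIntegrable_div_self hqm0 hqm1.le) fun q hq =>
            div_le_div_of_nonneg_right (chord q hq) (hqm0.trans_le hq.1).le
  refine ⟨chord, integral_bound, ?_⟩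
  calc -(0.7 * log qm) / (1 - qm) = 0.7 * (1 + (-log qm / (1 - qm) - 1)) := by ring
    _ ≤ 0.7 * (1 + ∫ q in qm..1, R q / q) := by gcongr
end

section
/- Let R: [0,1] → ℝ be concave and nonnegative with R(q_m) = 1 = max_{q ∈ [0,1]} R(q) for some q_m ∈ (0,1). Let v ≥ 0 and let q ∈ [q_m, 1] satisfy R(q) = v·q. Then q ≥ 1/(1 + v·(1 − q_m)). -/
open Set

theorem ConcaveOn.secant_le_s16 {s : Set ℝ} {f : ℝ → ℝ} (hf : ConcaveOn ℝ s f) {a b x : ℝ}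
    (ha : a ∈ s) (hb : b ∈ s) (hab : a < b) (hax : a ≤ x) (hxb : x ≤ b) :
    ((b - x) * f a + (x - a) * f b) / (b - a) ≤ f x := by
  have hba : 0 < b - a := sub_pos.2 hab
  have hweights : (b - x) / (b - a) + (x - a) / (b - a) = 1 := by
    field_simp
    ring
  have hpoint : (b - x) / (b - a) * a + (x - a) / (b - a) * b = x := by
    field_simp
    ring
  have := hf.2 ha hb (div_nonneg (sub_nonneg.2 hxb) hba.le)
    (div_nonneg (sub_nonneg.2 hax) hba.le) hweights
  simp only [smul_eq_mul, hpoint] at this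
  calc ((b - x) * f a + (x - a) * f b) / (b - a)
      = (b - x) / (b - a) * f a + (x - a) / (b - a) * f b := by ring
    _ ≤ f x := this

theorem quantile_lower_bound_below_monopoly_general
    (R : ℝ → ℝ)
    (hconc : ConcaveOn ℝ (Set.Icc 0 1) R)
    (hnonneg : ∀ q ∈ Set.Icc (0:ℝ) 1, 0 ≤ R q)
    (qm : ℝ) (hqm : qm ∈ Set.Ioo (0:ℝ) 1)
    (hRqm : R qm = 1)
    (v : ℝ)
    (q : ℝ) (hq : q ∈ Set.Icc qm 1)
    (hq_eq : R q = v * q) :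
    1 / (1 + v * (1 - qm)) ≤ q := by
  obtain ⟨hqm0, hqm1⟩ := hqm
  obtain ⟨hqmq, hq1⟩ := hq
  have h1 : (1 : ℝ) ∈ Icc 0 1 := right_mem_Icc.2 zero_le_one
  have hchord : (1 - q) / (1 - qm) ≤ v * q := by
    have hsecant := hconc.secant_le_s16 ⟨hqm0.le, hqm1.le⟩ h1 hqm1 hqmq hq1
    rw [hRqm, hq_eq] at hsecant
    -- `R 1 ≥ 0` lets us drop the right endpoint's term of the chord.
    refine le_trans (div_le_div_of_nonneg_right ?_ (sub_pos.2 hqm1).le) hsecant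
    nlinarith [hnonneg 1 h1]
  have hprod : 1 ≤ q * (1 + v * (1 - qm)) := by
    rw [div_le_iff₀ (sub_pos.2 hqm1)] at hchord
    linarith
  have hpos : 0 < 1 + v * (1 - qm) := pos_of_mul_pos_right (a := q) (by linarith) (by linarith)
  exact (div_le_iff₀ hpos).2 hprod

/-- First part of Lemma 5.10: for a normalized concave revenue curve `R` (maximum
revenue `R q_m = 1` at monopoly quantile `q_m`), the quantile `q ∈ [q_m, 1]` of any
value `v` (i.e. `R q = v * q`) satisfies `q ≥ 1 / (1 + v * (1 - q_m))`. -/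
theorem quantile_lower_bound_below_monopoly
    (R : ℝ → ℝ)
    (hconc : ConcaveOn ℝ (Set.Icc 0 1) R)
    (hnonneg : ∀ q ∈ Set.Icc (0:ℝ) 1, 0 ≤ R q)
    (qm : ℝ) (hqm : qm ∈ Set.Ioo (0:ℝ) 1)
    (hRqm : R qm = 1)
    (hRle : ∀ q ∈ Set.Icc (0:ℝ) 1, R q ≤ 1)
    (v : ℝ) (hv : 0 ≤ v)
    (q : ℝ) (hq : q ∈ Set.Icc qm 1)
    (hq_eq : R q = v * q) :
    1 / (1 + v * (1 - qm)) ≤ q :=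
  quantile_lower_bound_below_monopoly_general R hconc hnonneg qm hqm hRqm v q hq hq_eq
end
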